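/- With X, Z defined on two qubits as X = ½(σ^x⊗1 + 1⊗σ^x − i σ^z⊗σ^y + i σ^y⊗σ^z) and Z = (1/√2)e^{iπ/4}(σ^z⊗1 − i·1⊗σ^z), one has X² = σ^x⊗σ^x and Z² = σ^z⊗σ^z. -/

import Mathlib

/-!
Write `X = ½ (P + i Q)` with `P = σˣ⊗1 + 1⊗σˣ` and `Q = σʸ⊗σᶻ - σᶻ⊗σʸ`. Every term of `P`
anticommutes with every term of `Q`, so the cross terms cancel and `X² = ¼ (P² - Q²)`. Each of
`P`, `Q` is a sum of two commuting involutions whose product is `σˣ⊗σˣ`, hence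
`P² = 2 + 2 σˣ⊗σˣ`, `Q² = 2 - 2 σˣ⊗σˣ` and `X² = σˣ⊗σˣ`.
For `Z`, the involutions `σᶻ⊗1` and `1⊗σᶻ` commute, so the bracket squares to `-2i σᶻ⊗σᶻ`,
while the prefactor `e^{iπ/4}/√2` squares to `i/2`.
-/

open Matrix Complex Kronecker

noncomputable section

def sigmaX : Matrix (Fin 2) (Fin 2) ℂ := !![0, 1; 1, 0]
def sigmaY : Matrix (Fin 2) (Fin 2) ℂ := !![0, -Complex.I; Complex.I, 0]
def sigmaZ : Matrix (Fin 2) (Fin 2) ℂ := !![1, 0; 0, -1]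

def Xop : Matrix (Fin 2 × Fin 2) (Fin 2 × Fin 2) ℂ :=
  (1 / 2 : ℂ) • (sigmaX ⊗ₖ 1 + 1 ⊗ₖ sigmaX
    - Complex.I • (sigmaZ ⊗ₖ sigmaY) + Complex.I • (sigmaY ⊗ₖ sigmaZ))

def Zop : Matrix (Fin 2 × Fin 2) (Fin 2 × Fin 2) ℂ :=
  ((1 / Real.sqrt 2 : ℝ) * Complex.exp (Real.pi * Complex.I / 4)) •
    (sigmaZ ⊗ₖ 1 - Complex.I • (1 ⊗ₖ sigmaZ))

def Anticommute {R : Type*} [Mul R] [Neg R] (a b : R) : Prop := a * b = -(b * a)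

namespace Anticommute

variable {R : Type*} [Ring R] {a b c : R}

theorem symm (h : Anticommute a b) : Anticommute b a := by
  rw [Anticommute, h, neg_neg]

theorem add_left (ha : Anticommute a c) (hb : Anticommute b c) : Anticommute (a + b) c := by
  rw [Anticommute, add_mul, mul_add, ha, hb, neg_add]

theorem sub_right (hb : Anticommute a b) (hc : Anticommute a c) : Anticommute a (b - c) := by
  rw [Anticommute, mul_sub, sub_mul, hb, hc, neg_sub_neg, neg_sub]

theorem smul_right {S : Type*} [CommSemiring S] [Algebra S R] (h : Anticommute a b) (s : S) :
    Anticommute a (s • b) := by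
  rw [Anticommute, mul_smul_comm, smul_mul_assoc, h, smul_neg]

theorem add_sq (h : Anticommute a b) : (a + b) ^ 2 = a ^ 2 + b ^ 2 := by
  rw [sq, sq, sq, add_mul, mul_add, mul_add, h]
  abel

end Anticommute

namespace Commute

variable {R : Type*} [Ring R] {a b : R}

theorem add_sq_of_sq_eq_one (h : Commute a b) (ha : a ^ 2 = 1) (hb : b ^ 2 = 1) :
    (a + b) ^ 2 = 2 • (1 + a * b) := by
  rw [h.add_sq, ha, hb, mul_assoc, two_mul, two_nsmul]
  abel

theorem sub_sq_of_sq_eq_one (h : Commute a b) (ha : a ^ 2 = 1) (hb : b ^ 2 = 1) :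
    (a - b) ^ 2 = 2 • (1 - a * b) := by
  rw [h.sub_sq, ha, hb, mul_assoc, two_mul, two_nsmul]
  abel

end Commute

namespace Matrix

section Neg

variable {α l m n p : Type*} [Ring α]

theorem neg_kronecker (a : Matrix l m α) (b : Matrix n p α) : (-a) ⊗ₖ b = -(a ⊗ₖ b) := by
  ext; simp

theorem kronecker_neg (a : Matrix l m α) (b : Matrix n p α) : a ⊗ₖ (-b) = -(a ⊗ₖ b) := by
  ext; simp

end Neg

variable {α m n : Type*} [CommRing α] [Fintype m] [Fintype n]

theorem kronecker_sq [DecidableEq m] [DecidableEq n] (a : Matrix m m α) (b : Matrix n n α) :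
    (a ⊗ₖ b) ^ 2 = (a ^ 2) ⊗ₖ (b ^ 2) := by
  rw [sq, sq, sq, mul_kronecker_mul]

variable {a c : Matrix m m α} {b d : Matrix n n α}

theorem kronecker_sq_eq_one [DecidableEq m] [DecidableEq n] (ha : a ^ 2 = 1) (hb : b ^ 2 = 1) :
    (a ⊗ₖ b) ^ 2 = 1 := by
  rw [kronecker_sq, ha, hb, one_kronecker_one]

theorem commute_kronecker (hac : Commute a c) (hbd : Commute b d) :
    Commute (a ⊗ₖ b) (c ⊗ₖ d) := by
  rw [Commute, SemiconjBy, ← mul_kronecker_mul, ← mul_kronecker_mul, hac.eq, hbd.eq]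

theorem anticommute_kronecker_of_anticommute_of_commute (hac : Anticommute a c)
    (hbd : Commute b d) : Anticommute (a ⊗ₖ b) (c ⊗ₖ d) := by
  rw [Anticommute, ← mul_kronecker_mul, ← mul_kronecker_mul, hac, hbd.eq, neg_kronecker]

theorem anticommute_kronecker_of_commute_of_anticommute (hac : Commute a c)
    (hbd : Anticommute b d) : Anticommute (a ⊗ₖ b) (c ⊗ₖ d) := by
  rw [Anticommute, ← mul_kronecker_mul, ← mul_kronecker_mul, hac.eq, hbd, kronecker_neg]

theorem commute_kronecker_of_anticommute (hac : Anticommute a c) (hbd : Anticommute b d) :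
    Commute (a ⊗ₖ b) (c ⊗ₖ d) := by
  rw [Commute, SemiconjBy, ← mul_kronecker_mul, ← mul_kronecker_mul, hac, hbd, neg_kronecker,
    kronecker_neg, neg_neg]

end Matrix

theorem sigmaX_sq : sigmaX ^ 2 = 1 := by
  ext i j; fin_cases i <;> fin_cases j <;> simp [sigmaX, sq]

theorem sigmaY_sq : sigmaY ^ 2 = 1 := by
  ext i j; fin_cases i <;> fin_cases j <;> simp [sigmaY, sq]

theorem sigmaZ_sq : sigmaZ ^ 2 = 1 := by
  ext i j; fin_cases i <;> fin_cases j <;> simp [sigmaZ, sq]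

theorem anticommute_sigmaX_sigmaY : Anticommute sigmaX sigmaY := by
  ext i j; fin_cases i <;> fin_cases j <;> simp [sigmaX, sigmaY]

theorem anticommute_sigmaX_sigmaZ : Anticommute sigmaX sigmaZ := by
  ext i j; fin_cases i <;> fin_cases j <;> simp [sigmaX, sigmaZ]

theorem anticommute_sigmaY_sigmaZ : Anticommute sigmaY sigmaZ := by
  ext i j; fin_cases i <;> fin_cases j <;> simp [sigmaY, sigmaZ]

theorem sigmaY_mul_sigmaZ : sigmaY * sigmaZ = I • sigmaX := by
  ext i j; fin_cases i <;> fin_cases j <;> simp [sigmaX, sigmaY, sigmaZ]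

theorem Xop_sq : Xop ^ 2 = sigmaX ⊗ₖ sigmaX := by
  set A := sigmaX ⊗ₖ (1 : Matrix (Fin 2) (Fin 2) ℂ)
  set B := (1 : Matrix (Fin 2) (Fin 2) ℂ) ⊗ₖ sigmaX
  set C := sigmaZ ⊗ₖ sigmaY
  set D := sigmaY ⊗ₖ sigmaZ
  have hX : Xop = (1 / 2 : ℂ) • ((A + B) + I • (D - C)) := by
    show (1 / 2 : ℂ) • (A + B - I • C + I • D) = _
    module
  have hAB : A * B = sigmaX ⊗ₖ sigmaX := by
    rw [← mul_kronecker_mul, Matrix.mul_one, Matrix.one_mul]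
  have hDC : D * C = sigmaX ⊗ₖ sigmaX := by
    rw [← mul_kronecker_mul, anticommute_sigmaY_sigmaZ.symm, sigmaY_mul_sigmaZ, kronecker_neg,
      smul_kronecker, kronecker_smul, smul_smul, I_mul_I, neg_one_smul, neg_neg]
  have hP : (A + B) ^ 2 = 2 • (1 + sigmaX ⊗ₖ sigmaX) :=
    hAB ▸ (commute_kronecker (.one_right _) (.one_left _)).add_sq_of_sq_eq_one
      (kronecker_sq_eq_one sigmaX_sq (one_pow 2)) (kronecker_sq_eq_one (one_pow 2) sigmaX_sq)
  have hQ : (D - C) ^ 2 = 2 • (1 - sigmaX ⊗ₖ sigmaX) :=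
    hDC ▸ (commute_kronecker_of_anticommute anticommute_sigmaY_sigmaZ
      anticommute_sigmaY_sigmaZ.symm).sub_sq_of_sq_eq_one
      (kronecker_sq_eq_one sigmaY_sq sigmaZ_sq) (kronecker_sq_eq_one sigmaZ_sq sigmaY_sq)
  have hPQ : Anticommute (A + B) (D - C) :=
    .add_left
      (.sub_right
        (anticommute_kronecker_of_anticommute_of_commute anticommute_sigmaX_sigmaY (.one_left _))
        (anticommute_kronecker_of_anticommute_of_commute anticommute_sigmaX_sigmaZ (.one_left _)))
      (.sub_right
        (anticommute_kronecker_of_commute_of_anticommute (.one_left _) anticommute_sigmaX_sigmaZ)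
        (anticommute_kronecker_of_commute_of_anticommute (.one_left _) anticommute_sigmaX_sigmaY))
  rw [hX, smul_pow, (hPQ.smul_right I).add_sq, smul_pow, I_sq, hP, hQ]
  module

theorem exp_pi_mul_I_div_four_sq : exp (Real.pi * I / 4) ^ 2 = I := by
  rw [← exp_nat_mul]
  convert exp_pi_div_two_mul_I using 2
  push_cast
  ring

theorem Zop_sq : Zop ^ 2 = sigmaZ ⊗ₖ sigmaZ := by
  have hprefactor : ((1 / √2 : ℝ) * exp (Real.pi * I / 4) : ℂ) ^ 2 = I / 2 := by
    rw [mul_pow, ← ofReal_pow, div_pow, Real.sq_sqrt zero_le_two, exp_pi_mul_I_div_four_sq]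
    push_cast
    ring
  have hbracket : (sigmaZ ⊗ₖ 1 - I • (1 ⊗ₖ sigmaZ)) ^ 2 = (-2 * I) • (sigmaZ ⊗ₖ sigmaZ) := by
    rw [((commute_kronecker (.one_right _) (.one_left _)).smul_right I).sub_sq, smul_pow,
      kronecker_sq_eq_one sigmaZ_sq (one_pow 2), kronecker_sq_eq_one (one_pow 2) sigmaZ_sq, I_sq,
      mul_smul_comm, mul_assoc, ← mul_kronecker_mul, Matrix.one_mul, Matrix.mul_one, two_mul]
    module
  rw [Zop, smul_pow, hprefactor, hbracket, smul_smul,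
    show I / 2 * (-2 * I) = 1 by linear_combination -I_sq, one_smul]

theorem squares_of_generalized_Paulis :
    Xop ^ 2 = sigmaX ⊗ₖ sigmaX ∧ Zop ^ 2 = sigmaZ ⊗ₖ sigmaZ :=
  ⟨Xop_sq, Zop_sq⟩
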